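/- arXiv:2506.06893 — 4 statements merged into one kernel-verified Lean document; each statement's English description precedes it below -/
import Mathlib

section
/- Let D ≥ 1 be an integer, c > 0 a real number, and H(D) = ∑_{i=1}^{D} 1/i the D-th harmonic number. If x_1, ..., x_D are nonnegative reals satisfying ∑_{i=1}^{d} i·x_i > c·d / H(D) for every d ∈ {1, ..., D}, then ∑_{i=1}^{D} x_i > c. -/
/-!
Write `S d = ∑_{i ≤ d} i x_i`. Summation by parts recovers the plain sum from the prefix
moments with nonnegative weights,
`∑_{i ≤ D} x_i = ∑_{d < D} S d / (d (d + 1)) + S D / D`.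
For `x_i = 1 / i` we have `S d = d`, so the same weights turn the lower bounds `c d / H(D)`
into exactly `c`, while the bound on `S D` enters with the positive weight `1 / D`.
-/

open Finset

section PrefixMoment

variable {K : Type*} [Field K]

def prefixMoment (y : ℕ → K) (d : ℕ) : K := ∑ i ∈ Icc 1 d, (i : K) * y i

theorem prefixMoment_succ (y : ℕ → K) (d : ℕ) :
    prefixMoment y (d + 1) = prefixMoment y d + (d + 1 : K) * y (d + 1) := by
  rw [prefixMoment, sum_Icc_succ_top (by omega), Nat.cast_succ, prefixMoment]

variable [CharZero K]

theorem prefixMoment_one_div (d : ℕ) : prefixMoment (fun i => (1 : K) / i) d = d := by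
  calc prefixMoment (fun i => (1 : K) / i) d = ∑ _i ∈ Icc 1 d, (1 : K) :=
        sum_congr rfl fun i hi => mul_one_div_cancel (Nat.cast_ne_zero.mpr (by grind))
    _ = d := by simp

theorem sum_Icc_eq_sum_prefixMoment_div (y : ℕ → K) (D : ℕ) :
    ∑ i ∈ Icc 1 D, y i =
      ∑ d ∈ Ico 1 D, prefixMoment y d / (d * (d + 1)) + prefixMoment y D / D := by
  rcases Nat.eq_zero_or_pos D with rfl | hD
  · simp
  induction D, hD using Nat.le_induction with
  | base => simp [prefixMoment]
  | succ D hD ih =>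
    have hD0 : (D : K) ≠ 0 := Nat.cast_ne_zero.mpr (by omega)
    have hD1 : (D + 1 : K) ≠ 0 := by exact_mod_cast D.succ_ne_zero
    rw [sum_Icc_succ_top (by omega), ih, sum_Ico_succ_top hD, prefixMoment_succ, Nat.cast_succ]
    field_simp
    ring

end PrefixMoment

theorem stmt_2_general (D : ℕ) (hD : 1 ≤ D) (c : ℝ) (x : ℕ → ℝ)
    (h : ∀ d ∈ Finset.Icc 1 D,
      c * (d : ℝ) / (∑ i ∈ Finset.Icc 1 D, (1 : ℝ) / i) <
        ∑ i ∈ Finset.Icc 1 d, (i : ℝ) * x i) :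
    c < ∑ i ∈ Finset.Icc 1 D, x i := by
  set H : ℝ := ∑ i ∈ Icc 1 D, (1 : ℝ) / i
  have hH : 0 < H :=
    sum_pos (fun i hi => one_div_pos.mpr (Nat.cast_pos.mpr (mem_Icc.mp hi).1)) ⟨1, by simp [hD]⟩
  have hH_eq : H = ∑ d ∈ Ico 1 D, (d : ℝ) / (d * (d + 1)) + D / D := by
    simpa only [prefixMoment_one_div] using sum_Icc_eq_sum_prefixMoment_div (fun i => (1 : ℝ) / i) D
  have hlower (d : ℕ) (hd : d ∈ Icc 1 D) : c * d / H < prefixMoment x d := h d hd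
  calc c = c / H * H := (div_mul_cancel₀ c hH.ne').symm
    _ = ∑ d ∈ Ico 1 D, c * d / H / (d * (d + 1)) + c * D / H / D := by
      nth_rw 2 [hH_eq]
      rw [mul_add, mul_sum]
      congr 1
      · exact sum_congr rfl fun d _ => by ring
      · ring
    _ < ∑ d ∈ Ico 1 D, prefixMoment x d / (d * (d + 1)) + prefixMoment x D / D := by
      refine add_lt_add_of_le_of_lt (sum_le_sum fun d hd => ?_) ?_
      · have hd0 : (0 : ℝ) < d := Nat.cast_pos.mpr (mem_Ico.mp hd).1
        exact div_le_div_of_nonneg_right (hlower d (Ico_subset_Icc_self hd)).le (by positivity)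
      · exact div_lt_div_of_pos_right (hlower D (by simp [hD])) (by simp only [Nat.cast_pos]; omega)
    _ = ∑ i ∈ Icc 1 D, x i := (sum_Icc_eq_sum_prefixMoment_div x D).symm

theorem stmt_2 (D : ℕ) (hD : 1 ≤ D) (c : ℝ) (hc : 0 < c) (x : ℕ → ℝ)
    (hx : ∀ i ∈ Finset.Icc 1 D, 0 ≤ x i)
    (h : ∀ d ∈ Finset.Icc 1 D,
      c * (d : ℝ) / (∑ i ∈ Finset.Icc 1 D, (1 : ℝ) / i) <
        ∑ i ∈ Finset.Icc 1 d, (i : ℝ) * x i) :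
    c < ∑ i ∈ Finset.Icc 1 D, x i :=
  stmt_2_general D hD c x h
end

section
/- Let D ≥ 1 be an integer and suppose λ_D ∈ (0,1) satisfies ∏_{k=1}^{D} (1 - λ_D/k) = e^{-1}. Then 1/λ_D ≤ H(D) + 2, where H(D) = ∑_{k=1}^{D} 1/k is the D-th harmonic number. -/
/-!
Taking logarithms, the defining equation says `∑ₖ log (1 - λ/k) = -1`. The bound
`log (1 - x) ≥ -x / (1 - x)` together with `λ/k ≤ λ` gives `log (1 - λ/k) ≥ -(λ / (1 - λ)) / k`,
hence `-1 ≥ -(λ / (1 - λ)) H(D)`, i.e. `1 - λ ≤ λ H(D)`, which is `1/λ ≤ H(D) + 1`.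
-/

open Finset Real

lemma neg_div_one_sub_le_log_one_sub {x : ℝ} (hx : x < 1) : -(x / (1 - x)) ≤ log (1 - x) := by
  have h := one_sub_inv_le_log_of_pos (sub_pos.mpr hx)
  have hx' : 1 - x ≠ 0 := (sub_pos.mpr hx).ne'
  calc -(x / (1 - x)) = 1 - (1 - x)⁻¹ := by field_simp; ring
    _ ≤ log (1 - x) := h

lemma neg_div_one_sub_mul_inv_le_log_one_sub_div {lam k : ℝ} (hlam0 : 0 ≤ lam) (hlam1 : lam < 1)
    (hk : 1 ≤ k) : -(lam / (1 - lam)) * (1 / k) ≤ log (1 - lam / k) := by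
  have hle : lam / k ≤ lam := div_le_self hlam0 hk
  calc -(lam / (1 - lam)) * (1 / k) = -((lam / k) / (1 - lam)) := by ring
    _ ≤ -((lam / k) / (1 - lam / k)) := by gcongr
    _ ≤ log (1 - lam / k) := neg_div_one_sub_le_log_one_sub (by linarith)

lemma neg_div_one_sub_mul_sum_inv_le_log_prod {s : Finset ℕ} (hs : ∀ k ∈ s, 1 ≤ k) {lam : ℝ}
    (hlam0 : 0 ≤ lam) (hlam1 : lam < 1) :
    -(lam / (1 - lam)) * ∑ k ∈ s, (1 : ℝ) / k ≤ log (∏ k ∈ s, (1 - lam / (k : ℝ))) := by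
  have hk : ∀ k ∈ s, (1 : ℝ) ≤ k := fun k hks => by exact_mod_cast hs k hks
  have hfac : ∀ k ∈ s, 1 - lam / (k : ℝ) ≠ 0 := fun k hks =>
    (sub_pos.mpr ((div_le_self hlam0 (hk k hks)).trans_lt hlam1)).ne'
  rw [log_prod hfac, mul_sum]
  exact sum_le_sum fun k hks => neg_div_one_sub_mul_inv_le_log_one_sub_div hlam0 hlam1 (hk k hks)

theorem stmt_5_general (D : ℕ) (lam : ℝ) (hlam : lam ∈ Set.Ioo (0 : ℝ) 1)
    (h : ∏ k ∈ Finset.Icc 1 D, (1 - lam / (k : ℝ)) = Real.exp (-1)) :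
    1 / lam ≤ (∑ k ∈ Finset.Icc 1 D, (1 : ℝ) / k) + 2 := by
  obtain ⟨hlam0, hlam1⟩ := hlam
  have hlog := neg_div_one_sub_mul_sum_inv_le_log_prod
    (s := Icc 1 D) (fun k hk => (mem_Icc.mp hk).1) hlam0.le hlam1
  rw [h, log_exp, neg_mul, neg_le_neg_iff, div_mul_eq_mul_div, le_div_iff₀ (sub_pos.mpr hlam1)]
    at hlog
  rw [div_le_iff₀ hlam0]
  linarith

theorem stmt_5 (D : ℕ) (hD : 1 ≤ D) (lam : ℝ) (hlam : lam ∈ Set.Ioo (0 : ℝ) 1)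
    (h : ∏ k ∈ Finset.Icc 1 D, (1 - lam / (k : ℝ)) = Real.exp (-1)) :
    1 / lam ≤ (∑ k ∈ Finset.Icc 1 D, (1 : ℝ) / k) + 2 :=
  stmt_5_general D lam hlam h
end

section
/- Let c ≥ 1 be an integer, s an integer with 0 ≤ s ≤ c, and Ψ : [0,1] → ℝ a convex function with Ψ(1) = 0. Suppose a_1, ..., a_s are reals with 1/c ≤ a_ℓ ≤ (c - ℓ + 1)/c for every ℓ ∈ {1, ..., s}. Then ∑_{ℓ=1}^{s} (Ψ(a_ℓ - 1/c) - Ψ(a_ℓ)) ≥ Ψ((c - s)/c). -/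
/-! Convexity makes the increment `x ↦ Ψ (x - 1/c) - Ψ x` nonincreasing, so `a ℓ ≤ (c - ℓ + 1)/c`
bounds the `ℓ`-th summand below by `Ψ ((c - ℓ)/c) - Ψ ((c - ℓ + 1)/c)`; these bounds telescope to
`Ψ ((c - s)/c) - Ψ 1`. -/

open Finset

theorem ConvexOn.increment_mono {𝕜 : Type*} [Field 𝕜] [LinearOrder 𝕜] [IsStrictOrderedRing 𝕜]
    {s : Set 𝕜} {f : 𝕜 → 𝕜} (hf : ConvexOn 𝕜 s f) {x y d : 𝕜}
    (hxd : x - d ∈ s) (hy : y ∈ s) (hxy : x ≤ y) (hd : 0 ≤ d) :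
    f x - f (x - d) ≤ f y - f (y - d) := by
  rcases hd.eq_or_lt with rfl | hd
  · simp
  have hx : x ∈ s := hf.1.ordConnected.out hxd hy ⟨by linarith, hxy⟩
  have hyd : y - d ∈ s := hf.1.ordConnected.out hxd hy ⟨by linarith, by linarith⟩
  refine (div_le_div_iff_of_pos_right hd).1 ?_
  calc (f x - f (x - d)) / d = (f x - f (x - d)) / (x - (x - d)) := by rw [sub_sub_cancel]
    _ ≤ (f y - f (x - d)) / (y - (x - d)) :=
        hf.secant_mono hxd hx hy (by linarith) (by linarith) hxy
    _ = (f (x - d) - f y) / (x - d - y) := by rw [← neg_div_neg_eq, neg_sub, neg_sub]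
    _ ≤ (f (y - d) - f y) / (y - d - y) :=
        hf.secant_mono hy hxd hyd (by linarith) (by linarith) (by linarith)
    _ = (f y - f (y - d)) / d := by rw [← neg_div_neg_eq, neg_sub, sub_sub_cancel_left, neg_neg]

theorem Finset.sum_Icc_one_sub_pred {M : Type*} [AddCommGroup M] (f : ℕ → M) (n : ℕ) :
    ∑ i ∈ Icc 1 n, (f i - f (i - 1)) = f n - f 0 := by
  induction n with
  | zero => simp
  | succ n ih => rw [sum_Icc_succ_top (by omega), ih]; simp

theorem stmt_13 (c : ℕ) (hc : 1 ≤ c) (s : ℕ) (hs : s ≤ c)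
    (Ψ : ℝ → ℝ) (hconv : ConvexOn ℝ (Set.Icc (0 : ℝ) 1) Ψ) (hΨ1 : Ψ 1 = 0)
    (a : ℕ → ℝ)
    (ha : ∀ ℓ ∈ Finset.Icc 1 s,
      1 / (c : ℝ) ≤ a ℓ ∧ a ℓ ≤ ((c : ℝ) - ℓ + 1) / c) :
    Ψ (((c : ℝ) - s) / c) ≤
      ∑ ℓ ∈ Finset.Icc 1 s, (Ψ (a ℓ - 1 / (c : ℝ)) - Ψ (a ℓ)) := by
  have hc₀ : (0 : ℝ) < c := by exact_mod_cast hc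
  let g : ℕ → ℝ := fun ℓ ↦ Ψ ((c - ℓ) / c)
  have hg₀ : g 0 = 0 := by simp [g, hc₀.ne', hΨ1]
  have hterm : ∀ ℓ ∈ Icc 1 s, g ℓ - g (ℓ - 1) ≤ Ψ (a ℓ - 1 / c) - Ψ (a ℓ) := by
    intro ℓ hℓ
    obtain ⟨hℓ₁, hℓs⟩ := mem_Icc.1 hℓ
    obtain ⟨hlo, hhi⟩ := ha ℓ hℓ
    have hℓ₁' : (1 : ℝ) ≤ ℓ := by exact_mod_cast hℓ₁
    have hℓc : (ℓ : ℝ) ≤ c := by exact_mod_cast hℓs.trans hs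
    have hy_le : ((c : ℝ) - ℓ + 1) / c ≤ 1 := (div_le_one hc₀).2 (by linarith)
    have hy : ((c : ℝ) - ℓ + 1) / c ∈ Set.Icc (0 : ℝ) 1 := ⟨div_nonneg (by linarith) hc₀.le, hy_le⟩
    have hxd : a ℓ - 1 / c ∈ Set.Icc (0 : ℝ) 1 :=
      ⟨sub_nonneg.2 hlo, by linarith [one_div_pos.2 hc₀]⟩
    have hmono := hconv.increment_mono hxd hy hhi (one_div_pos.2 hc₀).le
    have hgℓ : g ℓ = Ψ (((c : ℝ) - ℓ + 1) / c - 1 / c) := by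
      simp only [g]; congr 1; ring
    have hgℓ' : g (ℓ - 1) = Ψ (((c : ℝ) - ℓ + 1) / c) := by
      simp only [g]; rw [Nat.cast_sub hℓ₁]; congr 1; push_cast; ring
    linarith
  calc Ψ (((c : ℝ) - s) / c) = ∑ ℓ ∈ Icc 1 s, (g ℓ - g (ℓ - 1)) := by
        rw [sum_Icc_one_sub_pred, hg₀, sub_zero]
    _ ≤ _ := sum_le_sum hterm
end

section
/- Let β ≥ 1, η ≥ 0, and c ≥ 1 be real numbers, and define Ψ(x) = η·(β^{1-x} - 1) with derivative Ψ'(x) = -η·(ln β)·β^{1-x}. Then for every x ∈ [0, 1], ln(β)·Ψ(x) + Ψ'(x - 1/c) ≥ -η·(ln β)·(1 + β·(β^{1/c} - 1)). -/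
theorem stmt_15 (β η c : ℝ) (hβ : 1 ≤ β) (hη : 0 ≤ η) (hc : 1 ≤ c)
    (x : ℝ) (hx : x ∈ Set.Icc (0 : ℝ) 1) :
    -η * Real.log β * (1 + β * (β ^ ((1 : ℝ) / c) - 1)) ≤
      Real.log β * (η * (β ^ ((1 : ℝ) - x) - 1)) +
        (-η * Real.log β * β ^ ((1 : ℝ) - (x - 1 / c))) := by
  obtain ⟨hx0, -⟩ := hx
  have hshift : β ^ ((1 : ℝ) - (x - 1 / c)) = β ^ ((1 : ℝ) - x) * β ^ ((1 : ℝ) / c) := by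
    rw [← Real.rpow_add (by linarith)]
    ring_nf
  have hbase : β ^ ((1 : ℝ) - x) ≤ β := by
    simpa using Real.rpow_le_rpow_of_exponent_le hβ (by linarith : (1 : ℝ) - x ≤ 1)
  have hroot : 1 ≤ β ^ ((1 : ℝ) / c) := Real.one_le_rpow hβ (by positivity)
  -- the right side minus the left side is `η log β (β - β^(1-x)) (β^(1/c) - 1)`
  have hgap : 0 ≤ η * Real.log β * ((β - β ^ ((1 : ℝ) - x)) * (β ^ ((1 : ℝ) / c) - 1)) :=
    mul_nonneg (mul_nonneg hη (Real.log_nonneg hβ))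
      (mul_nonneg (sub_nonneg.mpr hbase) (sub_nonneg.mpr hroot))
  rw [hshift]
  linarith
end
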